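/- arXiv:1509.01840 — 7 statements merged into one kernel-verified Lean document; each statement's English description precedes it below -/
import Mathlib

section
/- For each nonnegative integer k, the map t_k(x,y) = (1/(1+kx+y), x/(1+kx+y)) maps the open triangle Δ = {(x,y) : 0 < y < x < 1} into the subtriangle Δ_k = {(x,y) ∈ Δ : 1 - x - k y ≥ 0 > 1 - x - (k+1) y}, and is a right inverse of the triangle map T, i.e., T(t_k(x,y)) = (x,y) for all (x,y) ∈ Δ. -/
/-- Δ = {(x,y) : 0 < y < x < 1} -/
def TriDelta : Set (ℝ × ℝ) := {p | 0 < p.2 ∧ p.2 < p.1 ∧ p.1 < 1}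

/-- Δ_k = {(x,y) ∈ Δ : 1 - x - k y ≥ 0 > 1 - x - (k+1) y} -/
def TriDeltaK (k : ℕ) : Set (ℝ × ℝ) :=
  {p ∈ TriDelta | 1 - p.1 - k * p.2 ≥ 0 ∧ 0 > 1 - p.1 - (k + 1) * p.2}

/-- The branch T_k of the triangle map. -/
noncomputable def Tk (k : ℕ) (p : ℝ × ℝ) : ℝ × ℝ := (p.2 / p.1, (1 - p.1 - k * p.2) / p.1)

/-- The inverse branch t_k. -/
noncomputable def tk (k : ℕ) (p : ℝ × ℝ) : ℝ × ℝ :=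
  (1 / (1 + k * p.1 + p.2), p.1 / (1 + k * p.1 + p.2))

theorem stmt0 (k : ℕ) (p : ℝ × ℝ) (hp : p ∈ TriDelta) :
    tk k p ∈ TriDeltaK k ∧ Tk k (tk k p) = p := by
  obtain ⟨x, y⟩ := p
  obtain ⟨hy, hyx, hx1⟩ := hp
  simp only [] at hy hyx hx1
  have hx : (0:ℝ) < x := hy.trans hyx
  have hk : (0:ℝ) ≤ k * x := by positivity
  have hd : (0:ℝ) < 1 + k * x + y := by linarith
  have hd1 : (1:ℝ) < 1 + k * x + y := by linarith
  have hdne : (1 + (k:ℝ) * x + y) ≠ 0 := ne_of_gt hd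
  constructor
  · refine ⟨⟨?_, ?_, ?_⟩, ?_, ?_⟩ <;> simp only [tk, TriDelta, Set.mem_setOf_eq]
    · positivity
    · gcongr
    · rw [div_lt_one hd]; linarith
    · have : 1 - 1 / (1 + ↑k * x + y) - ↑k * (x / (1 + ↑k * x + y))
          = y / (1 + ↑k * x + y) := by field_simp; ring
      rw [this]; positivity
    · have : 1 - 1 / (1 + ↑k * x + y) - (↑k + 1) * (x / (1 + ↑k * x + y))
          = (y - x) / (1 + ↑k * x + y) := by field_simp; ring
      rw [this]
      apply div_neg_of_neg_of_pos <;> linarith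
  · simp only [Tk, tk, Prod.mk.injEq]
    constructor
    · field_simp
    · field_simp; ring
end

section
/- The function f(x,y) = 1/(x(1+y)) satisfies 𝓛 f = f on Δ, i.e., for all (x,y) with 0 < y < x < 1, ∑_{n=0}^∞ (1/(1+nx+y)³) · f(1/(1+nx+y), x/(1+nx+y)) = 1/(x(1+y)). -/
/-- The eigenfunction f(x,y) = 1/(x(1+y)). -/
noncomputable def fEig (p : ℝ × ℝ) : ℝ := 1 / (p.1 * (1 + p.2))

theorem stmt2 (x y : ℝ) (h1 : 0 < y) (h2 : y < x) (h3 : x < 1) :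
    ∑' n : ℕ, (1 / (1 + n * x + y) ^ 3) *
        fEig (1 / (1 + n * x + y), x / (1 + n * x + y))
      = 1 / (x * (1 + y)) := by
  have hx : 0 < x := h1.trans h2
  have hd : ∀ n : ℕ, 0 < 1 + n * x + y := by
    intro n; positivity
  set F : ℕ → ℝ := fun n => 1 / (x * (1 + n * x + y)) with hF
  have key : ∀ n : ℕ, (1 / (1 + n * x + y) ^ 3) *
      fEig (1 / (1 + n * x + y), x / (1 + n * x + y)) = F n - F (n + 1) := by
    intro n
    have h := hd n
    have h' := hd (n + 1)
    push_cast at h'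
    simp only [fEig, hF]
    push_cast
    field_simp
    ring
  have htendsto : Filter.Tendsto F Filter.atTop (nhds 0) := by
    have h1' : Filter.Tendsto (fun n : ℕ => x * (1 + n * x + y)) Filter.atTop Filter.atTop := by
      apply Filter.Tendsto.const_mul_atTop hx
      apply Filter.tendsto_atTop_add_const_right
      apply Filter.tendsto_atTop_add_const_left
      exact Filter.Tendsto.atTop_mul_const hx tendsto_natCast_atTop_atTop
    simpa [hF, one_div, mul_comm, Pi.inv_def, mul_inv] using h1'.inv_tendsto_atTop
  have hsum : HasSum (fun n : ℕ => F n - F (n + 1)) (F 0) := by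
    have hmono : ∀ n : ℕ, 0 ≤ F n - F (n + 1) := by
      intro n
      have h := hd n
      have h' := hd (n + 1)
      have hle : x * (1 + n * x + y) ≤ x * (1 + (n + 1 : ℕ) * x + y) := by
        apply mul_le_mul_of_nonneg_left _ hx.le
        push_cast; nlinarith
      have : F (n + 1) ≤ F n := by
        simp only [hF]
        apply one_div_le_one_div_of_le (by positivity) hle
      linarith
    rw [hasSum_iff_tendsto_nat_of_nonneg hmono]
    have hps : ∀ N : ℕ, ∑ i ∈ Finset.range N, (F i - F (i + 1)) = F 0 - F N := by
      intro N
      exact Finset.sum_range_sub' F N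
    simp only [hps]
    have := Filter.Tendsto.const_sub (F 0) htendsto
    simpa using this
  rw [tsum_congr key, hsum.tsum_eq]
  simp [hF]
end

section
/- Let f : Δ → ℝ be continuous with ‖f‖ := sup_{(x,y)∈Δ} |x f(x,y)| finite. Then for all (x,y) ∈ Δ, |x · 𝓛f(x,y)| ≤ 3‖f‖; in particular 𝓛 maps the Banach space V = {f continuous on Δ : sup |x f(x,y)| < ∞} continuously into itself with operator norm at most 3. -/
/-- The transfer operator of the triangle map. -/
noncomputable def TransferOp (f : ℝ × ℝ → ℝ) (p : ℝ × ℝ) : ℝ :=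
  ∑' n : ℕ, (1 / (1 + n * p.1 + p.2) ^ 3) *
    f (1 / (1 + n * p.1 + p.2), p.1 / (1 + n * p.1 + p.2))

theorem stmt3 (f : ℝ × ℝ → ℝ) (hf : ContinuousOn f TriDelta)
    (hbdd : BddAbove ((fun p => |p.1 * f p|) '' TriDelta)) :
    ∀ p ∈ TriDelta,
      |p.1 * TransferOp f p| ≤ 3 * sSup ((fun p => |p.1 * f p|) '' TriDelta) := by
  intro p hp
  obtain ⟨hy, hyx, hx1⟩ := hp
  set x := p.1 with hxdef
  set y := p.2 with hydef
  have hx : 0 < x := hy.trans hyx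
  set M := sSup ((fun p => |p.1 * f p|) '' TriDelta) with hM
  have hMnn : 0 ≤ M := by
    have hq : (((1:ℝ)/2, (1:ℝ)/4) : ℝ × ℝ) ∈ TriDelta := by
      simp only [TriDelta, Set.mem_setOf_eq]; norm_num
    have := le_csSup hbdd ⟨((1:ℝ)/2, (1:ℝ)/4), hq, rfl⟩
    exact le_trans (abs_nonneg _) this
  set d : ℕ → ℝ := fun n => 1 + n * x + y with hddef
  have hd1 : ∀ n : ℕ, 1 < d n := by
    intro n
    have hnx : (0:ℝ) ≤ n * x := mul_nonneg (Nat.cast_nonneg n) hx.le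
    simp only [hddef]; linarith
  have hd0 : ∀ n : ℕ, 0 < d n := fun n => lt_trans one_pos (hd1 n)
  set a : ℕ → ℝ := fun n => (1 / d n ^ 3) * f (1 / d n, x / d n) with hadef
  -- the image point lies in Δ
  have hpt : ∀ n : ℕ, ((1 / d n, x / d n) : ℝ × ℝ) ∈ TriDelta := by
    intro n
    refine ⟨div_pos hx (hd0 n), ?_, ?_⟩
    · exact (div_lt_div_iff_of_pos_right (hd0 n)).mpr hx1
    · exact (div_lt_one (hd0 n)).mpr (hd1 n)
  -- pointwise bound
  have hb : ∀ n : ℕ, |x * a n| ≤ x / d n ^ 2 * M := by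
    intro n
    have h1 : |(1 / d n) * f (1 / d n, x / d n)| ≤ M :=
      le_csSup hbdd ⟨(1 / d n, x / d n), hpt n, rfl⟩
    have hsc : x * (1 / d n ^ 3) = x / d n ^ 2 * (1 / d n) := by
      rw [mul_one_div, div_mul_div_comm, mul_one, ← pow_succ]
    have heq : |x * a n| = x / d n ^ 2 * |(1 / d n) * f (1 / d n, x / d n)| := by
      simp only [hadef]
      rw [← mul_assoc, hsc, mul_assoc, abs_mul, abs_of_pos (by positivity : (0:ℝ) < x / d n ^ 2)]
    rw [heq]
    exact mul_le_mul_of_nonneg_left h1 (by positivity)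
  -- telescoping majorant for n ≥ 1
  set h : ℕ → ℝ := fun n => 1 / (1 + n * x) with hhdef
  have hpos : ∀ n : ℕ, (0:ℝ) < 1 + n * x := by
    intro n
    have : (0:ℝ) ≤ n * x := mul_nonneg (Nat.cast_nonneg n) hx.le
    linarith
  have hkey : ∀ n : ℕ, x / d (n + 1) ^ 2 ≤ h n - h (n + 1) := by
    intro n
    have e1 : h n - h (n + 1) = x / ((1 + n * x) * (1 + (n + 1 : ℕ) * x)) := by
      simp only [hhdef]
      rw [div_sub_div _ _ (hpos n).ne' (hpos (n + 1)).ne']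
      push_cast
      ring
    rw [e1]
    apply div_le_div_of_nonneg_left hx.le (by positivity)
    have hnx : (0:ℝ) ≤ n * x := mul_nonneg (Nat.cast_nonneg n) hx.le
    have hdval : d (n + 1) = 1 + ((n : ℝ) + 1) * x + y := by
      simp only [hddef]; push_cast; ring
    rw [hdval]
    push_cast
    have hnx : (0:ℝ) ≤ (n:ℝ) * x := mul_nonneg (Nat.cast_nonneg n) hx.le
    nlinarith [sq_nonneg y, hy, hx, mul_nonneg hnx hx.le, mul_nonneg hnx hy.le,
      mul_nonneg hx.le hy.le]
  -- partial sum bound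
  have hS : ∀ N : ℕ, ∑ n ∈ Finset.range N, |x * a n| ≤ 3 * M := by
    intro N
    cases N with
    | zero => simp; positivity
    | succ k =>
      rw [Finset.sum_range_succ']
      have h0 : |x * a 0| ≤ M := by
        refine le_trans (hb 0) ?_
        have hd0' : 1 < d 0 := hd1 0
        have : x / d 0 ^ 2 ≤ 1 := by
          rw [div_le_one (by positivity)]
          nlinarith
        nlinarith
      have hsum : ∑ i ∈ Finset.range k, |x * a (i + 1)| ≤
          ∑ i ∈ Finset.range k, (h i - h (i + 1)) * M := by
        apply Finset.sum_le_sum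
        intro i _
        exact le_trans (hb (i + 1)) (mul_le_mul_of_nonneg_right (hkey i) hMnn)
      have htel : ∑ i ∈ Finset.range k, (h i - h (i + 1)) * M = (h 0 - h k) * M := by
        rw [← Finset.sum_mul, Finset.sum_range_sub' h k]
      have hh0 : h 0 = 1 := by simp [hhdef]
      have hhk : 0 ≤ h k := le_of_lt (one_div_pos.mpr (hpos k))
      have : (h 0 - h k) * M ≤ M := by
        rw [hh0]
        nlinarith
      linarith [hsum, htel ▸ hsum]
  -- summability
  have habssum : Summable (fun n => |x * a n|) :=
    summable_of_sum_range_le (fun n => abs_nonneg _) hS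
  have hsumm : Summable (fun n => x * a n) := habssum.of_abs
  have hTeq : x * TransferOp f p = ∑' n, x * a n := by
    rw [TransferOp, tsum_mul_left]
  rw [hTeq]
  calc |∑' n, x * a n| ≤ ∑' n, |x * a n| := by
        have h2 : Summable fun n => ‖x * a n‖ := by
          simp only [Real.norm_eq_abs]; exact habssum
        have := norm_tsum_le_tsum_norm (f := fun n => x * a n) h2
        simp only [Real.norm_eq_abs] at this
        exact this
    _ ≤ 3 * M := Real.tsum_le_of_sum_range_le (fun n => abs_nonneg _) hS
end

section
/- Suppose f ∈ V is nonzero and 𝓛f = λf. Then |λ| ≤ 1. (Idea: f is bounded as ±B/(x(1+y)) and 𝓛 preserves these bounds since 1/(x(1+y)) is a fixed point, so λⁿ f stays bounded, forcing |λ| ≤ 1.) -/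
/-!
The function `triDensity (x, y) = 1 / (x (1 + y))` is a fixed point of the transfer operator: its
`n`-th summand telescopes to `(1 / (1 + n x + y) - 1 / (1 + (n + 1) x + y)) / x`. As the operator
has positive weights, a bound `|f| ≤ c · triDensity` is therefore preserved by it. An eigenfunction
`f` in `V` satisfies such a bound, hence so does every `λⁿ f`, and evaluating at a point where
`f ≠ 0` shows that `|λ|ⁿ` stays bounded.
-/

open Filter Topology

noncomputable def triDensity (p : ℝ × ℝ) : ℝ := 1 / (p.1 * (1 + p.2))

lemma hasSum_sub_succ_of_antitone {u : ℕ → ℝ} (hu : Antitone u) (hlim : Tendsto u atTop (𝓝 0)) :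
    HasSum (fun n => u n - u (n + 1)) (u 0) := by
  rw [hasSum_iff_tendsto_nat_of_nonneg (fun n => sub_nonneg.2 (hu n.le_succ))]
  simp_rw [Finset.sum_range_sub']
  simpa using (tendsto_const_nhds (x := u 0)).sub hlim

lemma mem_triDelta_branch {p : ℝ × ℝ} (hp : p ∈ TriDelta) (n : ℕ) :
    (1 / (1 + n * p.1 + p.2), p.1 / (1 + n * p.1 + p.2)) ∈ TriDelta := by
  obtain ⟨hy, hyx, hx1⟩ := hp
  have hx : 0 < p.1 := hy.trans hyx
  have hd : 1 < 1 + n * p.1 + p.2 := by nlinarith [n.cast_nonneg (α := ℝ)]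
  have hd₀ : 0 < 1 + n * p.1 + p.2 := one_pos.trans hd
  exact ⟨div_pos hx hd₀, (div_lt_div_iff_of_pos_right hd₀).2 hx1, (div_lt_one hd₀).2 hd⟩

lemma branch_weight_mul_triDensity {x y : ℝ} (hx : 0 < x) (hy : 0 ≤ y) (n : ℕ) :
    1 / (1 + n * x + y) ^ 3 * triDensity (1 / (1 + n * x + y), x / (1 + n * x + y))
      = (1 / (1 + n * x + y) - 1 / (1 + (n + 1 : ℕ) * x + y)) / x := by
  have hd : 0 < 1 + n * x + y := by positivity
  have hd' : 0 < 1 + n * x + y + x := by positivity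
  rw [triDensity, show (1 : ℝ) + (n + 1 : ℕ) * x + y = 1 + n * x + y + x by push_cast; ring]
  field_simp
  ring

lemma hasSum_transferOp_triDensity {x y : ℝ} (hx : 0 < x) (hy : 0 ≤ y) :
    HasSum (fun n : ℕ =>
        1 / (1 + n * x + y) ^ 3 * triDensity (1 / (1 + n * x + y), x / (1 + n * x + y)))
      (triDensity (x, y)) := by
  simp_rw [branch_weight_mul_triDensity hx hy]
  set u : ℕ → ℝ := fun n => 1 / (1 + n * x + y)
  have hu : Antitone u := fun m n hmn => by
    dsimp only [u]
    gcongr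
  have hlim : Tendsto u atTop (𝓝 0) := by
    have hden : Tendsto (fun n : ℕ => 1 + n * x + y) atTop atTop :=
      tendsto_atTop_add_const_right _ _ <| tendsto_atTop_add_const_left _ _ <|
        tendsto_natCast_atTop_atTop.atTop_mul_const hx
    simpa [u, one_div, Function.comp_def] using tendsto_inv_atTop_zero.comp hden
  rw [show triDensity (x, y) = u 0 / x by simp [u, triDensity, div_eq_inv_mul, mul_comm]]
  exact (hasSum_sub_succ_of_antitone hu hlim).div_const x

lemma abs_transferOp_le {f : ℝ × ℝ → ℝ} {c : ℝ}
    (hf : ∀ q ∈ TriDelta, |f q| ≤ c * triDensity q) {p : ℝ × ℝ} (hp : p ∈ TriDelta) :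
    |TransferOp f p| ≤ c * triDensity p := by
  have hy : 0 < p.2 := hp.1
  have hx : 0 < p.1 := hy.trans hp.2.1
  rw [TransferOp, ← Real.norm_eq_abs]
  refine tsum_of_norm_bounded ((hasSum_transferOp_triDensity hx hy.le).mul_left c) fun n => ?_
  rw [norm_mul, Real.norm_of_nonneg (by positivity), Real.norm_eq_abs, mul_left_comm]
  exact mul_le_mul_of_nonneg_left (hf _ (mem_triDelta_branch hp n)) (by positivity)

lemma transferOp_const_mul (a : ℝ) (f : ℝ × ℝ → ℝ) (p : ℝ × ℝ) :
    TransferOp (fun q => a * f q) p = a * TransferOp f p := by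
  simp only [TransferOp, ← tsum_mul_left, mul_left_comm]

lemma abs_pow_mul_le_of_transferOp_eq {f : ℝ × ℝ → ℝ} {lam c : ℝ}
    (hf : ∀ q ∈ TriDelta, |f q| ≤ c * triDensity q)
    (heig : ∀ p ∈ TriDelta, TransferOp f p = lam * f p) (n : ℕ) :
    ∀ p ∈ TriDelta, |lam ^ n * f p| ≤ c * triDensity p := by
  induction n with
  | zero => simpa using hf
  | succ n ih =>
    intro p hp
    calc |lam ^ (n + 1) * f p| = |TransferOp (fun q => lam ^ n * f q) p| := by
          rw [transferOp_const_mul, heig p hp, pow_succ, mul_assoc]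
      _ ≤ c * triDensity p := abs_transferOp_le ih hp

lemma abs_le_triDensity_of_abs_fst_mul_le {f : ℝ × ℝ → ℝ} {C : ℝ}
    (hC : ∀ p ∈ TriDelta, |p.1 * f p| ≤ C) : ∀ p ∈ TriDelta, |f p| ≤ 2 * C * triDensity p := by
  intro p hp
  have hfx := hC p hp
  obtain ⟨hy, hyx, hx1⟩ := hp
  have hx : 0 < p.1 := hy.trans hyx
  rw [triDensity, mul_one_div, le_div_iff₀ (by positivity)]
  calc |f p| * (p.1 * (1 + p.2)) = |p.1 * f p| * (1 + p.2) := by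
        rw [abs_mul, abs_of_pos hx]; ring
    _ ≤ C * 2 := by nlinarith [abs_nonneg (p.1 * f p)]
    _ = 2 * C := mul_comm _ _

lemma le_one_of_forall_pow_le {R : Type*} [Semiring R] [LinearOrder R] [IsStrictOrderedRing R]
    [Archimedean R] [ExistsAddOfLE R] {a K : R} (h : ∀ n : ℕ, a ^ n ≤ K) : a ≤ 1 := by
  by_contra! ha
  obtain ⟨n, hn⟩ := pow_unbounded_of_one_lt K ha
  exact (h n).not_gt hn

theorem stmt7_general (f : ℝ × ℝ → ℝ) (lam : ℝ)
    (hbdd : ∃ C : ℝ, ∀ p ∈ TriDelta, |p.1 * f p| ≤ C)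
    (hne : ∃ p ∈ TriDelta, f p ≠ 0)
    (heig : ∀ p ∈ TriDelta, TransferOp f p = lam * f p) :
    |lam| ≤ 1 := by
  obtain ⟨C, hC⟩ := hbdd
  obtain ⟨p, hp, hfp⟩ := hne
  have hpow := abs_pow_mul_le_of_transferOp_eq (abs_le_triDensity_of_abs_fst_mul_le hC) heig
  refine le_one_of_forall_pow_le (K := 2 * C * triDensity p / |f p|) fun n => ?_
  rw [le_div_iff₀ (abs_pos.2 hfp), ← abs_pow, ← abs_mul]
  exact hpow n p hp

/-- An eigenvalue of the transfer operator on V has absolute value at most 1. -/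
theorem stmt7 (f : ℝ × ℝ → ℝ) (lam : ℝ)
    (hf : ContinuousOn f TriDelta)
    (hbdd : ∃ C : ℝ, ∀ p ∈ TriDelta, |p.1 * f p| ≤ C)
    (hne : ∃ p ∈ TriDelta, f p ≠ 0)
    (heig : ∀ p ∈ TriDelta, TransferOp f p = lam * f p) :
    |lam| ≤ 1 :=
  stmt7_general f lam hbdd hne heig
end

section
/- The iterated integral ∫_{1/2}^1 ∫_{1-x}^x (12/(π² x(1+y))) dy dx equals 1 - (6 Li₂(1/4) + 12 log²2)/π², where Li₂ is the dilogarithm. -/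
/-!
Up to the factor `12 / π²`, the inner integral is `(log (1 + x) - log (2 - x)) / x`.
Since `Li₂' z = -log (1 - z) / z`, the function `Li₂ (x / 2) - Li₂ (-x) - log 2 · log x` is a
primitive of it on `(0, 1)`, and its values at `1` and `1 / 2` reduce to `Li₂ (1 / 4)` by
`Li₂ z + Li₂ (-z) = Li₂ (z²) / 2` and `Li₂ 1 = ζ(2) = π² / 6`.
-/

open Real

/-- The dilogarithm Li₂(z) = ∑_{n≥1} zⁿ/n². -/
noncomputable def Li2 (z : ℝ) : ℝ := ∑' n : ℕ, z ^ (n + 1) / (n + 1) ^ 2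

open Set

lemma norm_Li2_term_le {z : ℝ} (hz : |z| ≤ 1) (n : ℕ) :
    ‖z ^ (n + 1) / ((n : ℝ) + 1) ^ 2‖ ≤ 1 / ((n : ℝ) + 1) ^ 2 := by
  rw [Real.norm_eq_abs, abs_div, abs_pow, abs_of_pos (by positivity : (0 : ℝ) < (n + 1) ^ 2)]
  gcongr
  exact pow_le_one₀ (abs_nonneg z) hz

lemma hasSum_one_div_nat_add_one_sq :
    HasSum (fun n : ℕ => 1 / ((n : ℝ) + 1) ^ 2) (π ^ 2 / 6) := by
  simpa using (hasSum_nat_add_iff' 1).mpr hasSum_zeta_two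

lemma hasSum_Li2 {z : ℝ} (hz : |z| ≤ 1) :
    HasSum (fun n : ℕ => z ^ (n + 1) / ((n : ℝ) + 1) ^ 2) (Li2 z) :=
  (Summable.of_norm_bounded hasSum_one_div_nat_add_one_sq.summable
    (norm_Li2_term_le hz)).hasSum

lemma Li2_one : Li2 1 = π ^ 2 / 6 := by
  have h := hasSum_Li2 (z := 1) (by simp)
  simp only [one_pow] at h
  exact h.unique hasSum_one_div_nat_add_one_sq

/-- The odd powers cancel and the even ones double. -/
lemma Li2_add_Li2_neg {z : ℝ} (hz : |z| ≤ 1) : Li2 z + Li2 (-z) = Li2 (z ^ 2) / 2 := by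
  have hz2 : |z ^ 2| ≤ 1 := by rw [abs_pow]; exact pow_le_one₀ (abs_nonneg z) hz
  have hsum := (hasSum_Li2 hz).add (hasSum_Li2 (z := -z) (by rwa [abs_neg]))
  refine hsum.unique ?_
  rw [← zero_add (Li2 (z ^ 2) / 2)]
  refine HasSum.even_add_odd (hasSum_zero.congr_fun fun k => ?_)
    (((hasSum_Li2 hz2).div_const 2).congr_fun fun k => ?_)
  · rw [(Even.add_one (even_two_mul k)).neg_pow]
    ring
  · rw [show 2 * k + 1 + 1 = 2 * (k + 1) by ring, pow_mul, pow_mul, neg_sq]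
    push_cast
    field_simp
    ring

lemma Li2_neg_one : Li2 (-1) = -(π ^ 2 / 12) := by
  have h := Li2_add_Li2_neg (z := 1) (by simp)
  rw [one_pow, Li2_one] at h
  linarith

lemma continuousOn_Li2 : ContinuousOn Li2 (Icc (-1) 1) :=
  continuousOn_tsum (fun _ => (continuous_pow _).continuousOn.div_const _)
    hasSum_one_div_nat_add_one_sq.summable
    fun n _ hz => norm_Li2_term_le (abs_le.mpr hz) n

lemma hasDerivAt_Li2 {z : ℝ} (hz : |z| < 1) (hz₀ : z ≠ 0) :
    HasDerivAt Li2 (-log (1 - z) / z) z := by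
  obtain ⟨r, hzr, hr₁⟩ := exists_between hz
  have hr₀ : 0 < r := (abs_nonneg z).trans_lt hzr
  have hz_mem : z ∈ Metric.ball (0 : ℝ) r := by rwa [mem_ball_zero_iff]
  have hterm : ∀ (n : ℕ) (y : ℝ), y ∈ Metric.ball (0 : ℝ) r →
      HasDerivAt (fun y : ℝ => y ^ (n + 1) / ((n : ℝ) + 1) ^ 2) (y ^ n / ((n : ℝ) + 1)) y := by
    intro n y _
    refine ((hasDerivAt_pow (n + 1) y).div_const (((n : ℝ) + 1) ^ 2)).congr_deriv ?_
    push_cast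
    field_simp
  have hbound : ∀ (n : ℕ) (y : ℝ), y ∈ Metric.ball (0 : ℝ) r →
      ‖y ^ n / ((n : ℝ) + 1)‖ ≤ r ^ n := by
    intro n y hy
    rw [mem_ball_zero_iff] at hy
    rw [norm_div, norm_pow, Real.norm_of_nonneg (by positivity : (0 : ℝ) ≤ n + 1)]
    calc ‖y‖ ^ n / ((n : ℝ) + 1) ≤ ‖y‖ ^ n := div_le_self (by positivity) (by linarith)
      _ ≤ r ^ n := by gcongr
  have hderiv := hasDerivAt_tsum_of_isPreconnected (summable_geometric_of_lt_one hr₀.le hr₁)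
    Metric.isOpen_ball (convex_ball (0 : ℝ) r).isPreconnected hterm hbound
    (Metric.mem_ball_self hr₀) (by simp) hz_mem
  refine hderiv.congr_deriv ?_
  refine (((hasSum_pow_div_log_of_abs_lt_one hz).div_const z).congr_fun fun n => ?_).tsum_eq
  field_simp
  ring

noncomputable def logRatioPrimitive (x : ℝ) : ℝ := Li2 (x / 2) - Li2 (-x) - log 2 * log x

lemma hasDerivAt_logRatioPrimitive {x : ℝ} (hx : x ∈ Ioo 0 1) :
    HasDerivAt logRatioPrimitive ((log (1 + x) - log (2 - x)) / x) x := by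
  obtain ⟨hx₀, hx₁⟩ := hx
  have hhalf := (hasDerivAt_Li2 (z := x / 2) (by rw [abs_of_pos (by positivity)]; linarith)
    (by positivity)).comp x ((hasDerivAt_id x).div_const 2)
  have hneg := (hasDerivAt_Li2 (z := -x) (by rw [abs_neg, abs_of_pos hx₀]; exact hx₁)
    (neg_ne_zero.mpr hx₀.ne')).comp x (hasDerivAt_neg x)
  refine ((hhalf.sub hneg).sub ((hasDerivAt_log hx₀.ne').const_mul (log 2))).congr_deriv ?_
  have hlog : log (2 - x) = log 2 + log (1 - x / 2) := by
    rw [← log_mul two_ne_zero (by linarith)]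
    ring_nf
  rw [hlog, sub_neg_eq_add]
  field_simp
  ring

lemma continuousOn_logRatioPrimitive : ContinuousOn logRatioPrimitive (Ioc 0 1) := by
  refine ((continuousOn_Li2.comp (continuousOn_id.div_const 2) ?_).sub
    (continuousOn_Li2.comp continuousOn_neg ?_)).sub
    (continuousOn_const.mul (continuousOn_log.mono ?_))
  · exact fun x ⟨hx₀, hx₁⟩ => ⟨by simp; linarith, by simp; linarith⟩
  · exact fun x ⟨hx₀, hx₁⟩ => ⟨by linarith, by linarith⟩
  · exact fun x ⟨hx₀, _⟩ => hx₀.ne'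

lemma integral_log_ratio_div :
    ∫ x in (1/2 : ℝ)..1, (log (1 + x) - log (2 - x)) / x
      = π ^ 2 / 12 - Li2 (1/4) / 2 - log 2 ^ 2 := by
  have hle : (1/2 : ℝ) ≤ 1 := by norm_num
  have hcont : ContinuousOn (fun x : ℝ => (log (1 + x) - log (2 - x)) / x) (Icc (1/2) 1) := by
    refine ((continuousOn_log.comp (by fun_prop) ?_).sub
      (continuousOn_log.comp (by fun_prop) ?_)).div continuousOn_id ?_
    · exact fun x hx => (by linarith [hx.1] : (0 : ℝ) < 1 + x).ne'
    · exact fun x hx => (by linarith [hx.2] : (0 : ℝ) < 2 - x).ne'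
    · exact fun x hx => (by linarith [hx.1] : (0 : ℝ) < x).ne'
  rw [intervalIntegral.integral_eq_sub_of_hasDerivAt_of_le hle
    (continuousOn_logRatioPrimitive.mono fun x ⟨h₁, h₂⟩ => ⟨by linarith, h₂⟩)
    (fun x ⟨h₁, h₂⟩ => hasDerivAt_logRatioPrimitive ⟨by linarith, h₂⟩)
    (hcont.intervalIntegrable_of_Icc hle)]
  have hhalf := Li2_add_Li2_neg (z := 1/2) (by norm_num [abs_of_pos])
  norm_num at hhalf
  simp only [logRatioPrimitive, log_one, one_div, log_inv, Li2_neg_one]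
  norm_num
  linarith

lemma integral_one_div_one_add {a b : ℝ} (ha : -1 < a) (hb : -1 < b) :
    ∫ y in a..b, 1 / (1 + y) = log (1 + b) - log (1 + a) := by
  rw [intervalIntegral.integral_comp_add_left (fun y => 1 / y),
    integral_one_div_of_pos (by linarith) (by linarith), log_div (by linarith) (by linarith)]

theorem stmt9 :
    ∫ x in (1/2 : ℝ)..1, ∫ y in (1 - x)..x, 12 / (π ^ 2 * x * (1 + y))
      = 1 - (6 * Li2 (1/4) + 12 * (Real.log 2) ^ 2) / π ^ 2 := by
  have hinner : EqOn (fun x : ℝ => ∫ y in (1 - x)..x, 12 / (π ^ 2 * x * (1 + y)))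
      (fun x => 12 / π ^ 2 * ((log (1 + x) - log (2 - x)) / x)) (uIcc (1/2) 1) := by
    intro x hx
    rw [uIcc_of_le (by norm_num)] at hx
    have hsplit : ∀ y, 12 / (π ^ 2 * x * (1 + y)) = 12 / (π ^ 2 * x) * (1 / (1 + y)) :=
      fun y => by rw [mul_one_div, div_div]
    simp only [hsplit, intervalIntegral.integral_const_mul]
    rw [integral_one_div_one_add (by linarith [hx.2]) (by linarith [hx.1]),
      show (1 : ℝ) + (1 - x) = 2 - x by ring]
    ring
  rw [intervalIntegral.integral_congr hinner, intervalIntegral.integral_const_mul,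
    integral_log_ratio_div]
  field_simp
  ring
end

section
/- For all real w > 1 and all s ≥ 0, ∑_{n=0}^∞ (1/(n+w)²) e^{-s/(n+w)} = ∫_0^∞ (J₁(2√(st))/√(st)) e^{-(w-1)t} · (t/(e^t−1)) dt, where J₁ is the Bessel function of the first kind of order one with J₁(2√u)/√u = ∑_{k=0}^∞ (−u)^k/(k!(k+1)!). -/
open Real MeasureTheory

/-- The entire function J₁(2√v)/√v = ∑_{k≥0} (−v)^k/(k!(k+1)!). -/
noncomputable def besselJ1Ratio (v : ℝ) : ℝ :=
  ∑' k : ℕ, (-v) ^ k / ((Nat.factorial k : ℝ) * (Nat.factorial (k + 1)))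

/-!
Both sides are sums of the same absolutely convergent double series over `(n, k)`. Expanding
`e^{-s/(n+w)}` in its exponential series turns the left side into
`∑ (-s)^k / (k! (n+w)^{k+2})`. On the right, `t e^{-(w-1)t}/(e^t - 1) = ∑ₙ t e^{-(n+w)t}`, and
multiplying by the series of `J₁(2√(st))/√(st)` gives the terms
`(-s)^k t^{k+1} e^{-(n+w)t} / (k! (k+1)!)`, whose integrals over `(0, ∞)` are exactly the terms
above since `∫ t^m e^{-rt} dt = m!/r^{m+1}`. Replacing `s` by `-|s|` turns both families into their
absolute values, which gives the summable majorant that allows exchanging sum and integral.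
-/

open Set
open scoped Nat

lemma integrableOn_pow_mul_exp_neg_mul_Ioi (m : ℕ) {r : ℝ} (hr : 0 < r) :
    IntegrableOn (fun t : ℝ => t ^ m * exp (-(r * t))) (Ioi 0) := by
  have := integrableOn_rpow_mul_exp_neg_mul_rpow (s := m) (p := 1)
    (by linarith [m.cast_nonneg (α := ℝ)]) one_pos hr
  simpa only [rpow_one, rpow_natCast, neg_mul] using this

lemma integral_pow_mul_exp_neg_mul_Ioi (m : ℕ) {r : ℝ} (hr : 0 < r) :
    ∫ t in Ioi (0 : ℝ), t ^ m * exp (-(r * t)) = m ! / r ^ (m + 1) := by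
  have := integral_rpow_mul_exp_neg_mul_Ioi (a := m + 1) (by positivity) hr
  rw [add_sub_cancel_right, Gamma_nat_eq_factorial] at this
  simp_rw [rpow_natCast] at this
  rw [this, ← Nat.cast_succ, rpow_natCast, one_div, inv_pow, inv_mul_eq_div]

lemma summable_norm_besselJ1Ratio_series (v : ℝ) :
    Summable fun k : ℕ => ‖(-v) ^ k / ((k ! : ℝ) * (k + 1)!)‖ := by
  refine (summable_pow_div_factorial |v|).of_nonneg_of_le (fun _ => norm_nonneg _) fun k => ?_
  rw [norm_div, norm_pow, norm_neg, Real.norm_eq_abs, norm_of_nonneg (by positivity)]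
  gcongr
  exact le_mul_of_one_le_right (by positivity) (mod_cast (k + 1).factorial_pos)

lemma hasSum_exp_neg_nat_add_mul {t : ℝ} (ht : 0 < t) (w : ℝ) :
    HasSum (fun n : ℕ => exp (-((n + w) * t))) (exp (-(w - 1) * t) / (exp t - 1)) := by
  have hq : exp (-t) < 1 := exp_lt_one_iff.2 (neg_lt_zero.2 ht)
  have hterm (n : ℕ) : exp (-((n + w) * t)) = exp (-(w * t)) * exp (-t) ^ n := by
    rw [← exp_nat_mul, ← exp_add]
    ring_nf
  have hsum : exp (-(w - 1) * t) / (exp t - 1) = exp (-(w * t)) * (1 - exp (-t))⁻¹ := by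
    have h1 : exp t - 1 ≠ 0 := (sub_pos.2 (one_lt_exp_iff.2 ht)).ne'
    have h2 : 1 - exp (-t) ≠ 0 := (sub_pos.2 hq).ne'
    rw [← div_eq_mul_inv, div_eq_div_iff h1 h2, exp_neg t]
    field_simp
    rw [← exp_add]
    ring_nf
  simp_rw [hterm, hsum]
  exact (hasSum_geometric_of_lt_one (exp_pos _).le hq).mul_left _

noncomputable def integrandTerm (s w : ℝ) (p : ℕ × ℕ) (t : ℝ) : ℝ :=
  (-s) ^ p.2 / ((p.2 ! : ℝ) * (p.2 + 1)!) * (t ^ (p.2 + 1) * exp (-((p.1 + w) * t)))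

noncomputable def sumTerm (s w : ℝ) (p : ℕ × ℕ) : ℝ :=
  (-s / (p.1 + w)) ^ p.2 / p.2 ! / (p.1 + w) ^ 2

lemma integrableOn_integrandTerm {s w : ℝ} (hw : 0 < w) (p : ℕ × ℕ) :
    IntegrableOn (integrandTerm s w p) (Ioi 0) :=
  (integrableOn_pow_mul_exp_neg_mul_Ioi _ (by positivity)).const_mul _

lemma integral_integrandTerm {s w : ℝ} (hw : 0 < w) (p : ℕ × ℕ) :
    ∫ t in Ioi (0 : ℝ), integrandTerm s w p t = sumTerm s w p := by
  have hpos : (0 : ℝ) < p.1 + w := by positivity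
  simp only [integrandTerm, sumTerm]
  rw [integral_const_mul, integral_pow_mul_exp_neg_mul_Ioi _ hpos, Nat.factorial_succ, div_pow]
  push_cast
  field_simp
  ring

lemma norm_integrandTerm {s w : ℝ} (p : ℕ × ℕ) {t : ℝ} (ht : 0 ≤ t) :
    ‖integrandTerm s w p t‖ = integrandTerm (-|s|) w p t := by
  rw [integrandTerm, integrandTerm, neg_neg, norm_mul, norm_div, norm_pow, norm_neg,
    Real.norm_eq_abs, norm_of_nonneg (by positivity), norm_of_nonneg (by positivity)]

lemma abs_sumTerm {s w : ℝ} (hw : 0 < w) (p : ℕ × ℕ) : |sumTerm s w p| = sumTerm (-|s|) w p := by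
  have hpos : (0 : ℝ) < p.1 + w := by positivity
  rw [sumTerm, sumTerm, abs_div, abs_div, abs_pow, abs_div, neg_neg, abs_neg, abs_of_pos hpos,
    Nat.abs_cast, abs_of_pos (pow_pos hpos 2)]

lemma hasSum_sumTerm_fiber (s w : ℝ) (n : ℕ) :
    HasSum (fun k => sumTerm s w (n, k)) (1 / (n + w) ^ 2 * exp (-s / (n + w))) := by
  have := (NormedSpace.expSeries_div_hasSum_exp (-s / (n + w))).div_const ((n + w) ^ 2)
  rwa [one_div_mul_eq_div, exp_eq_exp_ℝ]

lemma summable_sumTerm (s : ℝ) {w : ℝ} (hw : 0 < w) : Summable (sumTerm s w) := by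
  refine Summable.of_abs ?_
  simp_rw [abs_sumTerm hw]
  have hnonneg : 0 ≤ sumTerm (-|s|) w := fun p => by
    rw [← abs_sumTerm (s := s) hw]; exact abs_nonneg _
  refine (summable_prod_of_nonneg hnonneg).2 ⟨fun n => (hasSum_sumTerm_fiber _ w n).summable, ?_⟩
  have hdom : Summable fun n : ℕ => exp (|s| / w) * (1 / (n + w) ^ 2) := by
    refine .mul_left _ ?_
    simpa [abs_of_pos (by positivity : (0 : ℝ) < _ + w)] using
      (Real.summable_one_div_nat_add_rpow w 2).2 one_lt_two
  refine hdom.of_nonneg_of_le (fun n => tsum_nonneg fun k => hnonneg (n, k)) fun n => ?_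
  rw [(hasSum_sumTerm_fiber _ w n).tsum_eq, neg_neg, mul_comm]
  gcongr
  linarith [n.cast_nonneg (α := ℝ)]

lemma tsum_sumTerm (s : ℝ) {w : ℝ} (hw : 0 < w) :
    ∑' p, sumTerm s w p = ∑' n : ℕ, 1 / (n + w) ^ 2 * exp (-s / (n + w)) :=
  ((summable_sumTerm s hw).hasSum.prod_fiberwise (hasSum_sumTerm_fiber s w)).tsum_eq.symm

lemma hasSum_integrandTerm (s w : ℝ) {t : ℝ} (ht : 0 < t) :
    HasSum (fun p => integrandTerm s w p t)
      (besselJ1Ratio (s * t) * exp (-(w - 1) * t) * (t / (exp t - 1))) := by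
  set a : ℕ → ℝ := fun k => (-(s * t)) ^ k / ((k ! : ℝ) * (k + 1)!) * t
  have ha : Summable fun k => ‖a k‖ := by
    simpa only [a, norm_mul] using (summable_norm_besselJ1Ratio_series (s * t)).mul_right ‖t‖
  have hgeom := hasSum_exp_neg_nat_add_mul ht w
  have hgeom_norm : Summable fun n : ℕ => ‖exp (-((n + w) * t))‖ := by
    simpa only [norm_of_nonneg (exp_pos _).le] using hgeom.summable
  have hprod := hgeom.mul ha.of_norm.hasSum (summable_mul_of_summable_norm hgeom_norm ha)
  have hterm (p : ℕ × ℕ) : exp (-((p.1 + w) * t)) * a p.2 = integrandTerm s w p t := by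
    simp only [a, integrandTerm, neg_mul_eq_neg_mul, mul_pow, pow_succ]
    ring
  have hval : exp (-(w - 1) * t) / (exp t - 1) * ∑' k, a k
      = besselJ1Ratio (s * t) * exp (-(w - 1) * t) * (t / (exp t - 1)) := by
    rw [tsum_mul_right, besselJ1Ratio]
    ring
  simpa only [hterm, hval] using hprod

lemma summable_integral_norm_integrandTerm (s : ℝ) {w : ℝ} (hw : 0 < w) :
    Summable fun p => ∫ t in Ioi (0 : ℝ), ‖integrandTerm s w p t‖ := by
  refine (summable_sumTerm (-|s|) hw).congr fun p => ?_
  rw [← integral_integrandTerm hw,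
    setIntegral_congr_fun measurableSet_Ioi fun t ht => norm_integrandTerm p ht.le]

theorem stmt12_general (w s : ℝ) (hw : 1 < w) :
    ∑' n : ℕ, (1 / (n + w) ^ 2) * Real.exp (-s / (n + w))
      = ∫ t in Set.Ioi (0:ℝ),
          besselJ1Ratio (s * t) * Real.exp (-(w - 1) * t) * (t / (Real.exp t - 1)) := by
  have hw₀ : 0 < w := zero_lt_one.trans hw
  calc ∑' n : ℕ, (1 / (n + w) ^ 2) * exp (-s / (n + w))
      = ∑' p, ∫ t in Ioi (0 : ℝ), integrandTerm s w p t := by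
        simp_rw [integral_integrandTerm hw₀, tsum_sumTerm s hw₀]
    _ = ∫ t in Ioi (0 : ℝ), ∑' p, integrandTerm s w p t :=
        integral_tsum_of_summable_integral_norm (integrableOn_integrandTerm hw₀)
          (summable_integral_norm_integrandTerm s hw₀)
    _ = _ := setIntegral_congr_fun measurableSet_Ioi fun t ht =>
        (hasSum_integrandTerm s w ht).tsum_eq

theorem stmt12 (w s : ℝ) (hw : 1 < w) (hs : 0 ≤ s) :
    ∑' n : ℕ, (1 / (n + w) ^ 2) * Real.exp (-s / (n + w))
      = ∫ t in Set.Ioi (0:ℝ),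
          besselJ1Ratio (s * t) * Real.exp (-(w - 1) * t) * (t / (Real.exp t - 1)) :=
  stmt12_general w s hw
end

section
/- The functions η_k(s) = s^k e^{-s}/(k+1)! and e_k(s) = L_k¹(s) all belong to L²((0,∞), dm) where dm(s) = (s/(e^s−1)) ds, and the series ∑_{k=0}^∞ ‖e_k‖_{L²(dm)} · ‖η_k‖_{L²(dm)} converges. -/
open Real MeasureTheory

/-- The generalized Laguerre polynomial of order 1:
L_n¹(t) = ∑_{i=0}^n (−1)^i C(n+1, n−i) tⁱ/i!. -/
noncomputable def laguerre1 (n : ℕ) (t : ℝ) : ℝ :=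
  ∑ i ∈ Finset.range (n + 1),
    (-1) ^ i * (Nat.choose (n + 1) (n - i) : ℝ) * t ^ i / (Nat.factorial i : ℝ)

/-- The measure dm(s) = s/(eˢ − 1) ds on (0,∞). -/
noncomputable def mMeasure : Measure ℝ :=
  (volume.restrict (Set.Ioi (0:ℝ))).withDensity
    (fun s => ENNReal.ofReal (s / (Real.exp s - 1)))

/-- η_k(s) = s^k e^{-s}/(k+1)!. -/
noncomputable def etaFun (k : ℕ) (s : ℝ) : ℝ :=
  s ^ k * Real.exp (-s) / (Nat.factorial (k + 1) : ℝ)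

/-! Since `s / (eˢ - 1) ≤ (1 + s) e⁻ˢ` on `(0, ∞)`, the square of the `L²(dm)` norm of `f` is at
most `∫₀^∞ f(s)² (1 + s) e⁻ˢ ds`. For `η_k` this Gamma integral is at most `(4/9)^k / (2(k+1))`.
For `e_k = L_k¹ = ∑ aᵢ sⁱ` it equals `2(k+1)`: since `aᵢ (i+j)! = (-1)ⁱ C(k+1, i+1) (i+1)⋯(i+j)`,
the moment `∫ L_k¹(s) sʲ e⁻ˢ ds = ∑ aᵢ (i+j)!` is, up to sign, a `(k+1)`-st forward difference at
`0` of the rising factorial of degree `j`, so it vanishes for `1 ≤ j ≤ k`. Hence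
`‖e_k‖ ‖η_k‖ ≤ (2/3)^k`. -/

open scoped ENNReal Nat
open Finset Set Polynomial Function fwdDiff

theorem div_exp_sub_one_le_one_add_mul_exp_neg {s : ℝ} (hs : 0 < s) :
    s / (exp s - 1) ≤ (1 + s) * exp (-s) := by
  have hexp : 0 < exp s - 1 := by linarith [add_one_lt_exp hs.ne']
  rw [div_le_iff₀ hexp, exp_neg]
  field_simp
  nlinarith [add_one_le_exp s]

theorem eLpNorm_two_withDensity_sq_le {α : Type*} [MeasurableSpace α] {ν : Measure α}
    {d w f : α → ℝ} (hd : Measurable d) (hw : ∀ᵐ x ∂ν, 0 ≤ w x) (hdw : ∀ᵐ x ∂ν, d x ≤ w x)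
    (hfw : Integrable (fun x => f x ^ 2 * w x) ν) :
    eLpNorm f 2 (ν.withDensity fun x => ENNReal.ofReal (d x)) ^ 2
      ≤ ENNReal.ofReal (∫ x, f x ^ 2 * w x ∂ν) := by
  have hsq : ∀ x, ‖f x‖ₑ ^ 2 = ENNReal.ofReal (f x ^ 2) := fun x => by
    rw [Real.enorm_eq_ofReal_abs, ← ENNReal.ofReal_pow (abs_nonneg _), sq_abs]
  calc eLpNorm f 2 (ν.withDensity fun x => ENNReal.ofReal (d x)) ^ 2
      = ∫⁻ x, ‖f x‖ₑ ^ 2 ∂(ν.withDensity fun x => ENNReal.ofReal (d x)) := by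
        simpa using eLpNorm_nnreal_pow_eq_lintegral (f := f) (p := 2) two_ne_zero
    _ ≤ ∫⁻ x, ENNReal.ofReal (d x) * ‖f x‖ₑ ^ 2 ∂ν :=
        lintegral_withDensity_le_lintegral_mul ν hd.ennreal_ofReal _
    _ ≤ ∫⁻ x, ENNReal.ofReal (f x ^ 2 * w x) ∂ν := by
        refine lintegral_mono_ae ?_
        filter_upwards [hw, hdw] with x hwx hdwx
        rw [hsq, mul_comm (f x ^ 2), ENNReal.ofReal_mul hwx]
        gcongr
    _ = ENNReal.ofReal (∫ x, f x ^ 2 * w x ∂ν) := by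
        refine (ofReal_integral_eq_lintegral_ofReal hfw ?_).symm
        filter_upwards [hw] with x hwx
        positivity

section mMeasure

variable {f : ℝ → ℝ}

theorem eLpNorm_mMeasure_sq_le
    (hf : IntegrableOn (fun s => f s ^ 2 * ((1 + s) * exp (-s))) (Ioi 0)) :
    eLpNorm f 2 mMeasure ^ 2 ≤ ENNReal.ofReal (∫ s in Ioi 0, f s ^ 2 * ((1 + s) * exp (-s))) :=
  eLpNorm_two_withDensity_sq_le (by fun_prop)
    (ae_restrict_of_forall_mem measurableSet_Ioi fun s (hs : 0 < s) => by positivity)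
    (ae_restrict_of_forall_mem measurableSet_Ioi fun _ hs =>
      div_exp_sub_one_le_one_add_mul_exp_neg hs)
    hf

theorem memLp_two_mMeasure (hf : AEStronglyMeasurable f mMeasure)
    (hfw : IntegrableOn (fun s => f s ^ 2 * ((1 + s) * exp (-s))) (Ioi 0)) :
    MemLp f 2 mMeasure := by
  refine ⟨hf, lt_top_iff_ne_top.mpr fun htop => ?_⟩
  have := (eLpNorm_mMeasure_sq_le hfw).trans_lt ENNReal.ofReal_lt_top
  simp [htop] at this

theorem toReal_eLpNorm_mMeasure_sq_le
    (hf : IntegrableOn (fun s => f s ^ 2 * ((1 + s) * exp (-s))) (Ioi 0)) :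
    (eLpNorm f 2 mMeasure).toReal ^ 2 ≤ ∫ s in Ioi 0, f s ^ 2 * ((1 + s) * exp (-s)) := by
  rw [← ENNReal.toReal_pow]
  exact ENNReal.toReal_le_of_le_ofReal
    (setIntegral_nonneg measurableSet_Ioi fun s (hs : 0 < s) => by positivity)
    (eLpNorm_mMeasure_sq_le hf)

end mMeasure

theorem integrableOn_pow_mul_exp_neg_mul (n : ℕ) {r : ℝ} (hr : 0 < r) :
    IntegrableOn (fun s : ℝ => s ^ n * exp (-(r * s))) (Ioi 0) := by
  refine (integrableOn_rpow_mul_exp_neg_mul_rpow (p := 1) (s := n)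
    (by linarith [n.cast_nonneg (α := ℝ)]) one_pos hr).congr_fun (fun s _ => ?_) measurableSet_Ioi
  simp [Real.rpow_natCast, neg_mul]

theorem integral_pow_mul_exp_neg_mul (n : ℕ) {r : ℝ} (hr : 0 < r) :
    ∫ s in Ioi 0, s ^ n * exp (-(r * s)) = n ! / r ^ (n + 1) := by
  have h := integral_rpow_mul_exp_neg_mul_Ioi (a := n + 1) (by positivity) hr
  rw [add_sub_cancel_right, Real.Gamma_nat_eq_factorial, ← Nat.cast_add_one, Real.rpow_natCast,
    div_pow, one_pow] at h
  simp_rw [Real.rpow_natCast] at h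
  rw [h, one_div_mul_eq_div]

theorem integral_pow_mul_exp_neg (n : ℕ) : ∫ s in Ioi 0, s ^ n * exp (-s) = n ! := by
  simpa using integral_pow_mul_exp_neg_mul n one_pos

section PolynomialMoments

variable (a : ℕ → ℝ) (N j : ℕ)

theorem sum_mul_pow_mul_pow_mul_exp_neg (s : ℝ) :
    (∑ i ∈ range N, a i * s ^ i) * (s ^ j * exp (-s))
      = ∑ i ∈ range N, a i * (s ^ (i + j) * exp (-s)) := by
  rw [sum_mul]
  exact sum_congr rfl fun i _ => by ring

theorem integrableOn_sum_mul_pow_mul_pow_mul_exp_neg :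
    IntegrableOn (fun s => (∑ i ∈ range N, a i * s ^ i) * (s ^ j * exp (-s))) (Ioi 0) := by
  simp_rw [sum_mul_pow_mul_pow_mul_exp_neg]
  exact integrable_finsetSum _ fun i _ => by
    simpa using (integrableOn_pow_mul_exp_neg_mul (i + j) one_pos).const_mul (a i)

theorem integral_sum_mul_pow_mul_pow_mul_exp_neg :
    ∫ s in Ioi 0, (∑ i ∈ range N, a i * s ^ i) * (s ^ j * exp (-s))
      = ∑ i ∈ range N, a i * ((i + j)! : ℝ) := by
  simp_rw [sum_mul_pow_mul_pow_mul_exp_neg]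
  rw [integral_finsetSum _ fun i _ => by
    simpa using (integrableOn_pow_mul_exp_neg_mul (i + j) one_pos).const_mul (a i)]
  simp_rw [integral_const_mul, integral_pow_mul_exp_neg]

end PolynomialMoments

theorem sum_range_neg_one_pow_mul_choose_succ_mul_apply {R : Type*} [CommRing R] (f : R → R)
    (n : ℕ) :
    ∑ i ∈ range n, (-1) ^ i * (n.choose (i + 1) : R) * f ((i + 1 : ℕ) : R)
      = f 0 - (-1) ^ n * (Δ_[1])^[n] f 0 := by
  have hsign : ∀ i ∈ range n, (-1 : R) ^ n * (-1) ^ (n - (i + 1)) = -(-1) ^ i := by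
    intro i hi
    obtain ⟨m, rfl⟩ := Nat.exists_eq_add_of_lt (mem_range.mp hi)
    rw [show i + m + 1 - (i + 1) = m by omega]
    have hm : ((-1 : R) ^ m) ^ 2 = 1 := by rw [← pow_mul, mul_comm, pow_mul, neg_one_sq, one_pow]
    linear_combination (-(-1 : R) ^ i) * hm
  rw [fwdDiff_iter_eq_sum_shift, sum_range_succ', mul_add, Finset.mul_sum]
  simp only [zsmul_eq_mul, Int.cast_mul, Int.cast_pow, Int.cast_neg, Int.cast_one,
    Int.cast_natCast, zero_add, nsmul_eq_mul, mul_one, Nat.cast_zero, Nat.sub_zero,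
    Nat.choose_zero_right, Nat.cast_one]
  rw [← mul_assoc, ← pow_add, ← two_mul, pow_mul, neg_one_sq, one_pow, one_mul,
    sub_add_eq_sub_sub_swap, sub_self, zero_sub, ← sum_neg_distrib]
  refine sum_congr rfl fun i hi => ?_
  rw [← mul_assoc, ← mul_assoc, hsign i hi]
  ring

noncomputable def laguerre1Coeff (k i : ℕ) : ℝ :=
  (-1) ^ i * ((k + 1).choose (i + 1) : ℝ) / (i ! : ℝ)

theorem laguerre1_eq_sum (k : ℕ) :
    laguerre1 k = fun s => ∑ i ∈ range (k + 1), laguerre1Coeff k i * s ^ i := by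
  ext s
  refine sum_congr rfl fun i hi => ?_
  have hik : i ≤ k := Nat.lt_succ_iff.mp (mem_range.mp hi)
  rw [laguerre1Coeff, ← Nat.choose_symm_of_eq_add (by omega : k + 1 = (k - i) + (i + 1))]
  ring

theorem laguerre1Coeff_mul_factorial (k i j : ℕ) :
    laguerre1Coeff k i * ((i + j)! : ℝ)
      = (-1) ^ i * ((k + 1).choose (i + 1) : ℝ) * (ascPochhammer ℝ j).eval ((i + 1 : ℕ) : ℝ) := by
  rw [ascPochhammer_nat_eq_natCast_ascFactorial, ← Nat.factorial_mul_ascFactorial,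
    laguerre1Coeff, Nat.cast_mul]
  field_simp

noncomputable def laguerre1Moment (k j : ℕ) : ℝ :=
  ∫ s in Ioi 0, laguerre1 k s * (s ^ j * exp (-s))

theorem integrableOn_laguerre1_mul_pow_mul_exp_neg (k j : ℕ) :
    IntegrableOn (fun s => laguerre1 k s * (s ^ j * exp (-s))) (Ioi 0) := by
  rw [laguerre1_eq_sum]
  exact integrableOn_sum_mul_pow_mul_pow_mul_exp_neg _ _ j

theorem laguerre1Moment_eq_sum (k j : ℕ) :
    laguerre1Moment k j = ∑ i ∈ range (k + 1), (-1) ^ i * ((k + 1).choose (i + 1) : ℝ) *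
      (ascPochhammer ℝ j).eval ((i + 1 : ℕ) : ℝ) := by
  rw [laguerre1Moment, laguerre1_eq_sum, integral_sum_mul_pow_mul_pow_mul_exp_neg]
  simp_rw [laguerre1Coeff_mul_factorial]

theorem laguerre1Moment_of_le {k j : ℕ} (hj : j ≤ k) :
    laguerre1Moment k j = if j = 0 then 1 else 0 := by
  rw [laguerre1Moment_eq_sum,
    sum_range_neg_one_pow_mul_choose_succ_mul_apply (ascPochhammer ℝ _).eval,
    Polynomial.fwdDiff_iter_eq_zero_of_degree_lt (by simpa using Nat.lt_succ_of_le hj),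
    Pi.zero_apply, mul_zero, sub_zero, ascPochhammer_eval_zero]

theorem laguerre1Moment_succ_self (k : ℕ) :
    laguerre1Moment k (k + 1) = (-1) ^ k * ((k + 1)! : ℝ) := by
  have hdiff := (ascPochhammer ℝ (k + 1)).fwdDiff_iter_degree_eq_factorial
  rw [ascPochhammer_natDegree, (monic_ascPochhammer ℝ (k + 1)).leadingCoeff, one_smul] at hdiff
  rw [laguerre1Moment_eq_sum,
    sum_range_neg_one_pow_mul_choose_succ_mul_apply (ascPochhammer ℝ _).eval, hdiff,
    ascPochhammer_eval_zero, if_neg k.succ_ne_zero]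
  simp only [Pi.natCast_apply, pow_succ]
  ring

theorem laguerre1_sq_mul_weight (k : ℕ) (s : ℝ) :
    laguerre1 k s ^ 2 * ((1 + s) * exp (-s))
      = ∑ j ∈ range (k + 1), laguerre1Coeff k j *
          (laguerre1 k s * (s ^ j * exp (-s)) + laguerre1 k s * (s ^ (j + 1) * exp (-s))) := by
  have h : laguerre1 k s = ∑ j ∈ range (k + 1), laguerre1Coeff k j * s ^ j :=
    congrFun (laguerre1_eq_sum k) s
  rw [sq, mul_assoc]
  nth_rw 2 [h]
  rw [sum_mul, mul_sum]
  exact sum_congr rfl fun j _ => by ring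

theorem integrableOn_laguerre1_sq_mul_weight (k : ℕ) :
    IntegrableOn (fun s => laguerre1 k s ^ 2 * ((1 + s) * exp (-s))) (Ioi 0) := by
  simp_rw [laguerre1_sq_mul_weight]
  exact integrable_finsetSum _ fun j _ =>
    ((integrableOn_laguerre1_mul_pow_mul_exp_neg k j).fun_add
      (integrableOn_laguerre1_mul_pow_mul_exp_neg k (j + 1))).const_mul _

theorem integral_laguerre1_sq_mul_weight (k : ℕ) :
    ∫ s in Ioi 0, laguerre1 k s ^ 2 * ((1 + s) * exp (-s)) = 2 * ((k : ℝ) + 1) := by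
  simp_rw [laguerre1_sq_mul_weight]
  rw [integral_finsetSum _ fun j _ =>
    ((integrableOn_laguerre1_mul_pow_mul_exp_neg k j).fun_add
      (integrableOn_laguerre1_mul_pow_mul_exp_neg k (j + 1))).const_mul _]
  simp_rw [integral_const_mul]
  rw [sum_congr rfl fun j _ => by rw [integral_add (integrableOn_laguerre1_mul_pow_mul_exp_neg k j)
      (integrableOn_laguerre1_mul_pow_mul_exp_neg k (j + 1))]]
  simp only [← laguerre1Moment.eq_1, mul_add, sum_add_distrib]
  rw [sum_eq_single_of_mem 0 (by simp) fun j hj hj0 => ?_,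
    sum_eq_single_of_mem k (self_mem_range_succ k) fun j hj hjk => ?_]
  · rw [laguerre1Moment_of_le k.zero_le, if_pos rfl, laguerre1Moment_succ_self, laguerre1Coeff,
      laguerre1Coeff, Nat.factorial_succ]
    have hsq : ((-1 : ℝ) ^ k) ^ 2 = 1 := by rw [← pow_mul, mul_comm, pow_mul, neg_one_sq, one_pow]
    simp only [zero_add, Nat.choose_one_right, Nat.choose_self]
    push_cast
    field_simp
    linear_combination hsq
  · have := mem_range.mp hj
    rw [laguerre1Moment_of_le (by omega), if_neg (by omega), mul_zero]
  · have := mem_range.mp hj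
    rw [laguerre1Moment_of_le (by omega), if_neg hj0, mul_zero]

theorem etaFun_sq_mul_weight (k : ℕ) (s : ℝ) :
    etaFun k s ^ 2 * ((1 + s) * exp (-s))
      = (s ^ (2 * k) * exp (-(3 * s)) + s ^ (2 * k + 1) * exp (-(3 * s))) / ((k + 1)! : ℝ) ^ 2 := by
  have h3 : exp (-(3 * s)) = exp (-s) ^ 3 := by rw [← exp_nat_mul]; ring_nf
  rw [etaFun, h3]
  field_simp
  ring

theorem integrableOn_etaFun_sq_mul_weight (k : ℕ) :
    IntegrableOn (fun s => etaFun k s ^ 2 * ((1 + s) * exp (-s))) (Ioi 0) := by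
  simp_rw [etaFun_sq_mul_weight]
  exact ((integrableOn_pow_mul_exp_neg_mul _ three_pos).fun_add
    (integrableOn_pow_mul_exp_neg_mul _ three_pos)).div_const _

theorem integral_etaFun_sq_mul_weight (k : ℕ) :
    ∫ s in Ioi 0, etaFun k s ^ 2 * ((1 + s) * exp (-s))
      = ((2 * k)! / 3 ^ (2 * k + 1) + (2 * k + 1)! / 3 ^ (2 * k + 2)) / ((k + 1)! : ℝ) ^ 2 := by
  simp_rw [etaFun_sq_mul_weight]
  rw [integral_div, integral_add (integrableOn_pow_mul_exp_neg_mul _ three_pos)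
    (integrableOn_pow_mul_exp_neg_mul _ three_pos), integral_pow_mul_exp_neg_mul _ three_pos,
    integral_pow_mul_exp_neg_mul _ three_pos]

theorem integral_etaFun_sq_mul_weight_le (k : ℕ) :
    ∫ s in Ioi 0, etaFun k s ^ 2 * ((1 + s) * exp (-s)) ≤ (4 / 9) ^ k / (2 * ((k : ℝ) + 1)) := by
  have hcb : ((2 * k)! : ℝ) = k.centralBinom * k ! * k ! := by
    rw [Nat.centralBinom_eq_two_mul_choose, two_mul]
    exact_mod_cast (Nat.add_choose_mul_factorial_mul_factorial k k).symm
  have hcb_le : (k.centralBinom : ℝ) ≤ 4 ^ k := by exact_mod_cast k.centralBinom_le_four_pow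
  have h3 : ∀ m, (3 : ℝ) ^ (2 * k + m) = 9 ^ k * 3 ^ m := fun m => by
    rw [pow_add, pow_mul]; norm_num
  calc ∫ s in Ioi 0, etaFun k s ^ 2 * ((1 + s) * exp (-s))
      = k.centralBinom * (2 * k + 4) / (9 ^ (k + 1) * ((k : ℝ) + 1) ^ 2) := by
        rw [integral_etaFun_sq_mul_weight, Nat.factorial_succ (2 * k), Nat.factorial_succ k, h3, h3]
        push_cast
        rw [hcb]
        field_simp
        ring
    _ ≤ 4 ^ k * (9 / 2 * ((k : ℝ) + 1)) / (9 ^ (k + 1) * ((k : ℝ) + 1) ^ 2) := by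
        gcongr
        nlinarith [pow_pos (four_pos : (0 : ℝ) < 4) k]
    _ = (4 / 9) ^ k / (2 * ((k : ℝ) + 1)) := by
        rw [div_pow]
        field_simp
        ring

theorem stmt18 :
    (∀ k : ℕ, MemLp (etaFun k) 2 mMeasure) ∧
    (∀ k : ℕ, MemLp (laguerre1 k) 2 mMeasure) ∧
    Summable (fun k : ℕ =>
      (eLpNorm (laguerre1 k) 2 mMeasure).toReal * (eLpNorm (etaFun k) 2 mMeasure).toReal) := by
  refine ⟨fun k => memLp_two_mMeasure (by unfold etaFun; fun_prop)
      (integrableOn_etaFun_sq_mul_weight k),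
    fun k => memLp_two_mMeasure (by rw [laguerre1_eq_sum]; fun_prop)
      (integrableOn_laguerre1_sq_mul_weight k), ?_⟩
  refine Summable.of_nonneg_of_le (fun k => by positivity) (fun k => ?_)
    (summable_geometric_of_lt_one (by norm_num) (by norm_num : (2 / 3 : ℝ) < 1))
  have hL := (toReal_eLpNorm_mMeasure_sq_le (integrableOn_laguerre1_sq_mul_weight k)).trans_eq
    (integral_laguerre1_sq_mul_weight k)
  have hη := (toReal_eLpNorm_mMeasure_sq_le (integrableOn_etaFun_sq_mul_weight k)).trans
    (integral_etaFun_sq_mul_weight_le k)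
  rw [← pow_le_pow_iff_left₀ (by positivity) (by positivity) two_ne_zero]
  calc ((eLpNorm (laguerre1 k) 2 mMeasure).toReal * (eLpNorm (etaFun k) 2 mMeasure).toReal) ^ 2
      ≤ 2 * ((k : ℝ) + 1) * ((4 / 9) ^ k / (2 * ((k : ℝ) + 1))) := by
        rw [mul_pow]; gcongr
    _ = ((2 / 3) ^ k) ^ 2 := by
        rw [← pow_mul, mul_comm k, pow_mul]
        field_simp
        norm_num
end
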